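/- Assume μ satisfies (μ1)–(μ3), N > 2s♯, γ ∈ [0,γ₀] (so that the spectral theory for A_μ holds), and f satisfies (f1) and (f2). Then there exist k ∈ ℕ and β ∈ ℝ such that J(u) ≥ β for all u ∈ P_{k+1}; moreover, for such k the functional J is coercive on P_{k+1}, i.e. J(u) → +∞ as ‖u‖ → +∞ with u ∈ P_{k+1}. -/

import Mathlib

open MeasureTheory Filter Topology
open scoped ENNReal RealInnerProductSpace

noncomputable section

abbrev Rn (N : ℕ) := EuclideanSpace ℝ (Fin N)

/-- The Gagliardo-type bilinear form of fractional order `s ∈ [0,1]`,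
with the conventions `⟨u,v⟩_1 = ∫ ∇u·∇v` and `⟨u,v⟩_0 = ∫ u v`. -/
def gBilin (N : ℕ) (cns : ℝ → ℝ) (s : ℝ) (u v : Rn N → ℝ) : ℝ :=
  if s = 1 then ∫ x : Rn N, ⟪gradient u x, gradient v x⟫
  else if s = 0 then ∫ x : Rn N, u x * v x
  else cns s * ∫ x : Rn N, ∫ y : Rn N,
    (u x - u y) * (v x - v y) / ‖x - y‖ ^ ((N : ℝ) + 2 * s)

/-- The squared Gagliardo seminorm `[u]_s ^ 2`, valued in `[0,∞]`. -/
def gagSq (N : ℕ) (cns : ℝ → ℝ) (s : ℝ) (u : Rn N → ℝ) : ℝ≥0∞ :=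
  if s = 1 then ∫⁻ x : Rn N, ENNReal.ofReal (‖gradient u x‖ ^ 2)
  else if s = 0 then ∫⁻ x : Rn N, ENNReal.ofReal (u x ^ 2)
  else ENNReal.ofReal (cns s) * ∫⁻ x : Rn N, ∫⁻ y : Rn N,
    ENNReal.ofReal ((u x - u y) ^ 2 / ‖x - y‖ ^ ((N : ℝ) + 2 * s))

/-- Membership in the space `X₀(Ω)`. -/
def memX0 (N : ℕ) (cns : ℝ → ℝ) (Ω : Set (Rn N)) (μp : Measure ℝ)
    (u : Rn N → ℝ) : Prop :=
  Measurable u ∧ (∀ᵐ x : Rn N, x ∉ Ω → u x = 0) ∧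
    (∫⁻ s in Set.Icc (0 : ℝ) 1, gagSq N cns s u ∂μp) < ⊤

/-- `⟨u,v⟩ = ∫_{[0,1]} ⟨u,v⟩_s dμ⁺(s)`. -/
def innerP (N : ℕ) (cns : ℝ → ℝ) (μp : Measure ℝ) (u v : Rn N → ℝ) : ℝ :=
  ∫ s in Set.Icc (0 : ℝ) 1, gBilin N cns s u v ∂μp

/-- `(u,v) = ∫_{[0,s̄]} ⟨u,v⟩_s dμ⁻(s)`. -/
def innerM (N : ℕ) (cns : ℝ → ℝ) (μm : Measure ℝ) (sbar : ℝ) (u v : Rn N → ℝ) : ℝ :=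
  ∫ s in Set.Icc (0 : ℝ) sbar, gBilin N cns s u v ∂μm

/-- The bilinear form `⟨u,v⟩ - (u,v)` associated with `A_μ`. -/
def formB (N : ℕ) (cns : ℝ → ℝ) (μp μm : Measure ℝ) (sbar : ℝ) (u v : Rn N → ℝ) : ℝ :=
  innerP N cns μp u v - innerM N cns μm sbar u v

/-- `lam` is a Dirichlet eigenvalue of the superposition operator `A_μ`. -/
def IsEigenvalue (N : ℕ) (cns : ℝ → ℝ) (Ω : Set (Rn N)) (μp μm : Measure ℝ) (sbar : ℝ)
    (lam : ℝ) : Prop :=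
  ∃ u : Rn N → ℝ, memX0 N cns Ω μp u ∧ ¬ (u =ᵐ[volume] (0 : Rn N → ℝ)) ∧
    ∀ v : Rn N → ℝ, memX0 N cns Ω μp v →
      formB N cns μp μm sbar u v = lam * ∫ x in Ω, u x * v x

/-- `(ev, e)` is the nondecreasing sequence of Dirichlet eigenvalues of `A_μ`
(counted with multiplicity, diverging to `+∞`) together with corresponding
eigenfunctions, enjoying the variational (minimum) characterization. -/
def IsEigenSystem (N : ℕ) (cns : ℝ → ℝ) (Ω : Set (Rn N)) (μp μm : Measure ℝ) (sbar : ℝ)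
    (ev : ℕ → ℝ) (e : ℕ → Rn N → ℝ) : Prop :=
  0 < ev 0 ∧ Monotone ev ∧ Tendsto ev atTop atTop ∧
  (∀ n, memX0 N cns Ω μp (e n)) ∧
  (∀ n, ¬ (e n =ᵐ[volume] (0 : Rn N → ℝ))) ∧
  (∀ n, ∀ v, memX0 N cns Ω μp v →
    formB N cns μp μm sbar (e n) v = ev n * ∫ x in Ω, e n x * v x) ∧
  (∀ n, (∀ j, j < n → formB N cns μp μm sbar (e n) (e j) = 0) ∧
    ev n = formB N cns μp μm sbar (e n) (e n) / ∫ x in Ω, (e n x) ^ 2 ∧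
    (∀ u, memX0 N cns Ω μp u → ¬ (u =ᵐ[volume] (0 : Rn N → ℝ)) →
      (∀ j, j < n → formB N cns μp μm sbar u (e j) = 0) →
      ev n ≤ formB N cns μp μm sbar u u / ∫ x in Ω, (u x) ^ 2))

/-- The primitive `F(x,t) = ∫₀ᵗ f(x,τ) dτ`. -/
def Fprim {N : ℕ} (f : Rn N → ℝ → ℝ) (x : Rn N) (t : ℝ) : ℝ :=
  ∫ τ in (0 : ℝ)..t, f x τ

/-- The energy functional `J` associated with the problem `A_μ u - λ̄ u = f(x,u)`. -/
def Jfun (N : ℕ) (cns : ℝ → ℝ) (Ω : Set (Rn N)) (μp μm : Measure ℝ) (sbar : ℝ)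
    (f : Rn N → ℝ → ℝ) (lamBar : ℝ) (u : Rn N → ℝ) : ℝ :=
  (1 / 2) * formB N cns μp μm sbar u u - lamBar / 2 * (∫ x in Ω, (u x) ^ 2)
    - ∫ x in Ω, Fprim f x (u x)

/-- The Fréchet derivative of `J`: the value `J'(u)[v]`. -/
def dJ (N : ℕ) (cns : ℝ → ℝ) (Ω : Set (Rn N)) (μp μm : Measure ℝ) (sbar : ℝ)
    (f : Rn N → ℝ → ℝ) (lamBar : ℝ) (u v : Rn N → ℝ) : ℝ :=
  formB N cns μp μm sbar u v - lamBar * (∫ x in Ω, u x * v x) - ∫ x in Ω, f x (u x) * v x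

/-- `u` is a weak solution of `A_μ u - λ̄ u = f(x,u)` in `Ω`, `u = 0` outside `Ω`. -/
def IsWeakSolution (N : ℕ) (cns : ℝ → ℝ) (Ω : Set (Rn N)) (μp μm : Measure ℝ) (sbar : ℝ)
    (f : Rn N → ℝ → ℝ) (lamBar : ℝ) (u : Rn N → ℝ) : Prop :=
  memX0 N cns Ω μp u ∧ ∀ v, memX0 N cns Ω μp v →
    formB N cns μp μm sbar u v = lamBar * (∫ x in Ω, u x * v x) + ∫ x in Ω, f x (u x) * v x

/-- `f` is a Carathéodory function on `Ω × ℝ`. -/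
def Caratheodory {N : ℕ} (Ω : Set (Rn N)) (f : Rn N → ℝ → ℝ) : Prop :=
  (∀ t : ℝ, Measurable fun x => f x t) ∧
    ∀ᵐ x ∂(volume.restrict Ω), Continuous fun t => f x t

/-- Condition (f1): local `L^∞` bounds. -/
def CondF1 {N : ℕ} (Ω : Set (Rn N)) (f : Rn N → ℝ → ℝ) : Prop :=
  ∀ τ : ℝ, 0 < τ → ∃ M : ℝ, ∀ᵐ x ∂(volume.restrict Ω), ∀ t : ℝ, |t| ≤ τ → |f x t| ≤ M

/-- Condition (f2): `f(x,t)/t → 0` as `|t| → ∞`, uniformly a.e. in `Ω`. -/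
def CondF2 {N : ℕ} (Ω : Set (Rn N)) (f : Rn N → ℝ → ℝ) : Prop :=
  ∀ ε : ℝ, 0 < ε → ∃ R : ℝ, 0 < R ∧
    ∀ᵐ x ∂(volume.restrict Ω), ∀ t : ℝ, R ≤ |t| → |f x t| ≤ ε * |t|

/-- Condition (f3): `f(x,t)/t → lam0` as `t → 0`, uniformly a.e. in `Ω`. -/
def CondF3 {N : ℕ} (Ω : Set (Rn N)) (f : Rn N → ℝ → ℝ) (lam0 : ℝ) : Prop :=
  ∀ ε : ℝ, 0 < ε → ∃ δ : ℝ, 0 < δ ∧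
    ∀ᵐ x ∂(volume.restrict Ω), ∀ t : ℝ, t ≠ 0 → |t| < δ → |f x t - lam0 * t| ≤ ε * |t|


/-! On `P_{k+1}` the variational characterization of the eigenvalues gives
`‖u‖² ≥ λ_{k+1} ∫ u²`, while (f1)–(f2) give `|f(x,t)| ≤ |t| + M`, hence
`F(x,t) ≤ (3/2) t² + M²/2`. Once `λ_{k+1} ≥ 2 (λ̄ + 3)` this yields
`J(u) ≥ ‖u‖²/4 - |Ω| M²/2`, which is both the lower bound and the coercivity. -/

lemma gBilin_self_eq_zero_of_ae_eq_zero {N : ℕ} (cns : ℝ → ℝ) {s : ℝ} (hs : s ≠ 1)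
    {u : Rn N → ℝ} (hu : u =ᵐ[volume] 0) : gBilin N cns s u u = 0 := by
  unfold gBilin
  rw [if_neg hs]
  split_ifs
  · exact integral_eq_zero_of_ae (by filter_upwards [hu] with x hx; simp [hx])
  · refine mul_eq_zero_of_right _ (integral_eq_zero_of_ae ?_)
    filter_upwards [hu] with x hx
    refine integral_eq_zero_of_ae ?_
    filter_upwards [hu] with y hy
    simp [hx, hy]

lemma gBilin_self_nonneg_of_ae_eq_zero {N : ℕ} (cns : ℝ → ℝ) (s : ℝ)
    {u : Rn N → ℝ} (hu : u =ᵐ[volume] 0) : 0 ≤ gBilin N cns s u u := by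
  by_cases hs : s = 1
  · rw [gBilin, if_pos hs]
    exact integral_nonneg fun _ => real_inner_self_nonneg
  · exact (gBilin_self_eq_zero_of_ae_eq_zero cns hs hu).ge

-- `gradient` does not respect a.e. equality: the `s = 1` term of `gBilin` survives for `u =ᵐ 0`.
lemma formB_self_nonneg_of_ae_eq_zero {N : ℕ} (cns : ℝ → ℝ) (μp : Measure ℝ)
    {μm : Measure ℝ} (hμm : μm {1} = 0) (sbar : ℝ) {u : Rn N → ℝ}
    (hu : u =ᵐ[volume] 0) : 0 ≤ formB N cns μp μm sbar u u := by
  have hP : 0 ≤ innerP N cns μp u u :=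
    setIntegral_nonneg measurableSet_Icc fun s _ => gBilin_self_nonneg_of_ae_eq_zero cns s hu
  have hM : innerM N cns μm sbar u u = 0 := by
    refine integral_eq_zero_of_ae (ae_restrict_of_ae ?_)
    refine measure_mono_null (fun s hs => ?_) hμm
    by_contra h1
    exact hs (gBilin_self_eq_zero_of_ae_eq_zero cns h1 hu)
  rw [formB, hM, sub_zero]
  exact hP

namespace IsEigenSystem

variable {N : ℕ} {cns : ℝ → ℝ} {Ω : Set (Rn N)} {μp μm : Measure ℝ} {sbar : ℝ}
  {ev : ℕ → ℝ} {e : ℕ → Rn N → ℝ}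

lemma ev_pos (hsys : IsEigenSystem N cns Ω μp μm sbar ev e) (n : ℕ) : 0 < ev n :=
  hsys.1.trans_le (hsys.2.1 n.zero_le)

-- If `∫ u²` were `0` (possibly as the junk value of a non-integrable function), the
-- minimum characterization `ev n ≤ B(u,u) / ∫ u²` would read `ev n ≤ 0`.
lemma integral_sq_pos (hsys : IsEigenSystem N cns Ω μp μm sbar ev e) {n : ℕ}
    {u : Rn N → ℝ} (hu : memX0 N cns Ω μp u) (hne : ¬ u =ᵐ[volume] 0)
    (horth : ∀ j, j < n → formB N cns μp μm sbar u (e j) = 0) :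
    0 < ∫ x in Ω, (u x) ^ 2 := by
  refine (integral_nonneg fun x => sq_nonneg (u x)).lt_of_ne fun h0 => ?_
  have hmin := (hsys.2.2.2.2.2.2 n).2.2 u hu hne horth
  rw [← h0, div_zero] at hmin
  exact (hsys.ev_pos n).not_ge hmin

lemma integrable_sq (hsys : IsEigenSystem N cns Ω μp μm sbar ev e) {n : ℕ}
    {u : Rn N → ℝ} (hu : memX0 N cns Ω μp u)
    (horth : ∀ j, j < n → formB N cns μp μm sbar u (e j) = 0) :
    Integrable (fun x => (u x) ^ 2) (volume.restrict Ω) := by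
  by_cases hz : u =ᵐ[volume] 0
  · refine (integrable_zero _ _ _).congr (ae_restrict_of_ae ?_)
    filter_upwards [hz] with x hx
    simp [hx]
  · by_contra h
    exact (hsys.integral_sq_pos hu hz horth).ne' (integral_undef h)

lemma ev_mul_integral_sq_le_formB (hsys : IsEigenSystem N cns Ω μp μm sbar ev e)
    (hμm : μm {1} = 0) {n : ℕ} {u : Rn N → ℝ} (hu : memX0 N cns Ω μp u)
    (horth : ∀ j, j < n → formB N cns μp μm sbar u (e j) = 0) :
    ev n * ∫ x in Ω, (u x) ^ 2 ≤ formB N cns μp μm sbar u u := by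
  by_cases hz : u =ᵐ[volume] 0
  · have hT : ∫ x in Ω, (u x) ^ 2 = 0 := by
      refine integral_eq_zero_of_ae (ae_restrict_of_ae ?_)
      filter_upwards [hz] with x hx
      simp [hx]
    rw [hT, mul_zero]
    exact formB_self_nonneg_of_ae_eq_zero cns μp hμm sbar hz
  · exact (le_div_iff₀ (hsys.integral_sq_pos hu hz horth)).mp
      ((hsys.2.2.2.2.2.2 n).2.2 u hu hz horth)

end IsEigenSystem

lemma CondF2.exists_abs_le_mul_abs_add {N : ℕ} {Ω : Set (Rn N)} {f : Rn N → ℝ → ℝ}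
    (hf2 : CondF2 Ω f) (hf1 : CondF1 Ω f) {ε : ℝ} (hε : 0 < ε) :
    ∃ M : ℝ, ∀ᵐ x ∂(volume.restrict Ω), ∀ t : ℝ, |f x t| ≤ ε * |t| + M := by
  obtain ⟨R, hR, hlarge⟩ := hf2 ε hε
  obtain ⟨M, hsmall⟩ := hf1 R hR
  refine ⟨max M 0, ?_⟩
  filter_upwards [hlarge, hsmall] with x hlarge hsmall t
  have hεt : 0 ≤ ε * |t| := by positivity
  rcases le_total |t| R with ht | ht
  · linarith [hsmall t ht, le_max_left M 0]
  · linarith [hlarge t ht, le_max_right M 0]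

lemma Fprim_le {N : ℕ} {f : Rn N → ℝ → ℝ} {x : Rn N} {a M : ℝ} (ha : 0 ≤ a)
    (hf : ∀ τ : ℝ, |f x τ| ≤ a * |τ| + M) (t : ℝ) :
    Fprim f x t ≤ (a + 1 / 2) * t ^ 2 + M ^ 2 / 2 := by
  have hbound : ∀ τ ∈ Set.uIoc (0 : ℝ) t, ‖f x τ‖ ≤ a * |t| + M := by
    intro τ hτ
    have hτt : |τ| ≤ |t| := by
      rcases Set.mem_uIoc.mp hτ with ⟨h0, hτ⟩ | ⟨h0, hτ⟩
      · rw [abs_of_pos h0]; exact hτ.trans (le_abs_self t)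
      · rw [abs_of_nonpos hτ]; linarith [neg_abs_le t]
    rw [Real.norm_eq_abs]
    linarith [hf τ, mul_le_mul_of_nonneg_left hτt ha]
  have habs : |Fprim f x t| ≤ (a * |t| + M) * |t| := by
    simpa [Fprim] using intervalIntegral.norm_integral_le_of_norm_le_const hbound
  nlinarith [le_abs_self (Fprim f x t), sq_abs t, sq_nonneg (|t| - M)]

lemma integral_Fprim_le {N : ℕ} {Ω : Set (Rn N)} (hΩ : volume Ω < ⊤) {f : Rn N → ℝ → ℝ}
    {a M : ℝ} (ha : 0 ≤ a)
    (hf : ∀ᵐ x ∂(volume.restrict Ω), ∀ τ : ℝ, |f x τ| ≤ a * |τ| + M)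
    {u : Rn N → ℝ} (hu : Integrable (fun x => (u x) ^ 2) (volume.restrict Ω)) :
    ∫ x in Ω, Fprim f x (u x) ≤
      (a + 1 / 2) * (∫ x in Ω, (u x) ^ 2) + volume.real Ω * (M ^ 2 / 2) := by
  have : IsFiniteMeasure (volume.restrict Ω) := ⟨by rwa [Measure.restrict_apply_univ]⟩
  have hrhs : ∫ x in Ω, ((a + 1 / 2) * (u x) ^ 2 + M ^ 2 / 2) =
      (a + 1 / 2) * (∫ x in Ω, (u x) ^ 2) + volume.real Ω * (M ^ 2 / 2) := by
    rw [integral_add (hu.const_mul _) (integrable_const _), integral_const_mul, integral_const,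
      measureReal_restrict_apply_univ, smul_eq_mul]
  rw [← hrhs]
  by_cases hF : Integrable (fun x => Fprim f x (u x)) (volume.restrict Ω)
  · refine integral_mono_ae hF ((hu.const_mul _).add (integrable_const _)) ?_
    filter_upwards [hf] with x hx
    exact Fprim_le ha hx (u x)
  · rw [integral_undef hF]
    exact integral_nonneg fun x => by positivity

lemma sub_le_Jfun {N : ℕ} (cns : ℝ → ℝ) {Ω : Set (Rn N)} (hΩ : volume Ω < ⊤)
    (μp μm : Measure ℝ) (sbar : ℝ) {f : Rn N → ℝ → ℝ} {a M : ℝ} (ha : 0 ≤ a)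
    (hf : ∀ᵐ x ∂(volume.restrict Ω), ∀ τ : ℝ, |f x τ| ≤ a * |τ| + M) (lamBar : ℝ)
    {u : Rn N → ℝ} (hu : Integrable (fun x => (u x) ^ 2) (volume.restrict Ω)) :
    1 / 2 * formB N cns μp μm sbar u u - (lamBar + 2 * a + 1) / 2 * (∫ x in Ω, (u x) ^ 2)
      - volume.real Ω * (M ^ 2 / 2) ≤ Jfun N cns Ω μp μm sbar f lamBar u := by
  rw [Jfun]
  linarith [integral_Fprim_le hΩ ha hf hu]

lemma exists_lower_bound_and_coercive_of_mul_sub_le {α : Type*} (P : α → Prop) (q J : α → ℝ)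
    {a c : ℝ}
    (ha : 0 < a) (hq : ∀ u, P u → 0 ≤ q u) (hJ : ∀ u, P u → a * q u - c ≤ J u) :
    (∃ β : ℝ, ∀ u, P u → β ≤ J u) ∧
      ∀ M : ℝ, ∃ R : ℝ, 0 < R ∧ ∀ u, P u → R ≤ Real.sqrt (q u) → M ≤ J u := by
  refine ⟨⟨-c, fun u hu => by nlinarith [hq u hu, hJ u hu]⟩, fun M => ?_⟩
  refine ⟨Real.sqrt ((|M| + |c| + 1) / a), by positivity, fun u hu hR => ?_⟩
  rw [Real.sqrt_le_sqrt_iff (hq u hu), div_le_iff₀ ha] at hR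
  linarith [hJ u hu, le_abs_self M, le_abs_self c, mul_comm a (q u)]

theorem statement15_general (N : ℕ)
    (Ω : Set (Rn N)) (hΩb : Bornology.IsBounded Ω)
    (cns : ℝ → ℝ)
    (μp μm : Measure ℝ)
    (sbar : ℝ) (hsbar1 : sbar ≤ 1)
    (hμ2 : μm (Set.Icc sbar 1) = 0)                                   -- (μ2)
    -- the spectral theory for `A_μ` holds (`γ ∈ [0,γ₀]`):
    (ev : ℕ → ℝ) (e : ℕ → Rn N → ℝ)
    (hsys : IsEigenSystem N cns Ω μp μm sbar ev e)
    (f : Rn N → ℝ → ℝ)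
    (hf1 : CondF1 Ω f) (hf2 : CondF2 Ω f)
    (lamBar : ℝ) :
    ∃ (k : ℕ) (β : ℝ),
      (∀ u : Rn N → ℝ, memX0 N cns Ω μp u →
        (∀ j, j < k → formB N cns μp μm sbar u (e j) = 0) →
        β ≤ Jfun N cns Ω μp μm sbar f lamBar u) ∧
      (∀ M : ℝ, ∃ R : ℝ, 0 < R ∧
        ∀ u : Rn N → ℝ, memX0 N cns Ω μp u →
          (∀ j, j < k → formB N cns μp μm sbar u (e j) = 0) →
          R ≤ Real.sqrt (formB N cns μp μm sbar u u) →
          M ≤ Jfun N cns Ω μp μm sbar f lamBar u) := by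
  obtain ⟨M, hf⟩ := hf2.exists_abs_le_mul_abs_add hf1 one_pos
  have hμm : μm {1} = 0 := measure_mono_null (by simpa using hsbar1) hμ2
  obtain ⟨k, hk⟩ := (hsys.2.2.1.eventually_ge_atTop (2 * (lamBar + 3))).exists
  set P : (Rn N → ℝ) → Prop := fun u =>
    memX0 N cns Ω μp u ∧ ∀ j, j < k → formB N cns μp μm sbar u (e j) = 0
  have hB : ∀ u, P u → ev k * ∫ x in Ω, (u x) ^ 2 ≤ formB N cns μp μm sbar u u :=
    fun u hu => hsys.ev_mul_integral_sq_le_formB hμm hu.1 hu.2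
  have hT : ∀ u : Rn N → ℝ, 0 ≤ ∫ x in Ω, (u x) ^ 2 := fun u =>
    integral_nonneg fun x => sq_nonneg (u x)
  have hq : ∀ u, P u → 0 ≤ formB N cns μp μm sbar u u := fun u hu =>
    (mul_nonneg (hsys.ev_pos k).le (hT u)).trans (hB u hu)
  have hJ : ∀ u, P u → 1 / 4 * formB N cns μp μm sbar u u - volume.real Ω * (M ^ 2 / 2) ≤
      Jfun N cns Ω μp μm sbar f lamBar u := fun u hu => by
    have hJu := sub_le_Jfun cns hΩb.measure_lt_top μp μm sbar zero_le_one
      (by simpa only [one_mul] using hf) lamBar (hsys.integrable_sq hu.1 hu.2)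
    linarith [hB u hu, mul_le_mul_of_nonneg_right hk (hT u)]
  obtain ⟨⟨β, hβ⟩, hcoercive⟩ :=
    exists_lower_bound_and_coercive_of_mul_sub_le P _ _ (by norm_num) hq hJ
  exact ⟨k, β, fun u hu horth => hβ u ⟨hu, horth⟩, fun M' => (hcoercive M').imp
    fun _ ⟨hR, h⟩ => ⟨hR, fun u hu horth => h u ⟨hu, horth⟩⟩⟩

/-- first part of the proof of Proposition 1.1: under (μ1)–(μ3),
`N > 2s♯`, and (f1)–(f2), there are `k ∈ ℕ` and `β ∈ ℝ` such that `J ≥ β` on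
`P_{k+1}` (the orthogonal of the first `k` eigenfunctions); moreover `J` is
coercive on `P_{k+1}`. -/
theorem statement15 (N : ℕ) (hN : 2 ≤ N)
    (Ω : Set (Rn N)) (hΩo : IsOpen Ω) (hΩb : Bornology.IsBounded Ω)
    (cns : ℝ → ℝ) (hcns : ∀ s ∈ Set.Ioo (0 : ℝ) 1, 0 < cns s)
    (μp μm : Measure ℝ) (hfinp : IsFiniteMeasure μp) (hfinm : IsFiniteMeasure μm)
    (hsuppp : μp (Set.Icc (0 : ℝ) 1)ᶜ = 0) (hsuppm : μm (Set.Icc (0 : ℝ) 1)ᶜ = 0)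
    (sbar γ ssharp : ℝ) (hsbar0 : 0 < sbar) (hsbar1 : sbar ≤ 1) (hγ : 0 ≤ γ)
    (hμ1 : 0 < μp (Set.Icc sbar 1))                                   -- (μ1)
    (hμ2 : μm (Set.Icc sbar 1) = 0)                                   -- (μ2)
    (hμ3 : μm (Set.Icc (0 : ℝ) sbar) ≤
      ENNReal.ofReal γ * μp (Set.Icc sbar 1))                          -- (μ3)
    (hs1 : sbar ≤ ssharp) (hs2 : ssharp ≤ 1) (hμs : 0 < μp (Set.Icc ssharp 1))
    (hNs : 2 * ssharp < (N : ℝ))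
    -- the spectral theory for `A_μ` holds (`γ ∈ [0,γ₀]`):
    (ev : ℕ → ℝ) (e : ℕ → Rn N → ℝ)
    (hsys : IsEigenSystem N cns Ω μp μm sbar ev e)
    (f : Rn N → ℝ → ℝ) (hcar : Caratheodory Ω f)
    (hf1 : CondF1 Ω f) (hf2 : CondF2 Ω f)
    (lamBar : ℝ) :
    ∃ (k : ℕ) (β : ℝ),
      (∀ u : Rn N → ℝ, memX0 N cns Ω μp u →
        (∀ j, j < k → formB N cns μp μm sbar u (e j) = 0) →
        β ≤ Jfun N cns Ω μp μm sbar f lamBar u) ∧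
      (∀ M : ℝ, ∃ R : ℝ, 0 < R ∧
        ∀ u : Rn N → ℝ, memX0 N cns Ω μp u →
          (∀ j, j < k → formB N cns μp μm sbar u (e j) = 0) →
          R ≤ Real.sqrt (formB N cns μp μm sbar u u) →
          M ≤ Jfun N cns Ω μp μm sbar f lamBar u) :=
  statement15_general N Ω hΩb cns μp μm sbar hsbar1 hμ2 ev e hsys f hf1 hf2 lamBar

end
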